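/- arXiv:2009.02087 — 2 statements merged into one kernel-verified Lean document; each statement's English description precedes it below -/
import Mathlib

section
/- Let n ≥ 2, κ > 0, ν ∈ ℂ, and x = (x₁,…,xₙ) ∈ ℝⁿ. Then, as the positive integer m tends to ∞, F_D(−mν, κ,…,κ; nκ; 1−e^{(x₁−xₙ)/m},…,1−e^{(x_{n−1}−xₙ)/m}) converges to Φ₂^{(n−1)}[κ,…,κ; nκ; ν(x₁−xₙ),…,ν(x_{n−1}−xₙ)] (here F_D has n−1 lower parameters, all equal to κ). -/
/-!
Write `s = ∑ mⱼ`. The `m`-th term of the Lauricella series is `(-Mν)ₛ ∏ⱼ (1 - e^{tⱼ/M})^{mⱼ}` times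
an `M`-independent coefficient, and `(Mz)ₛ / Mˢ → zˢ`, `M (1 - e^{t/M}) → -t` show that it tends to
the `m`-th Humbert term. With `‖bⱼ‖ + 1 ≤ β` and `‖tⱼ‖ ≤ τ`, for `M ≥ M₀` the term is at most
`∏_{i<s} 2βτ (‖ν‖ + i/M₀) / ‖c + i‖`, whose factors tend to `2βτ/M₀ < 1/2`. This gives a summable
bound `C 2⁻ˢ` uniform in `M`, and Tannery's theorem (dominated convergence for series) concludes.
-/

open Finset Filter

/-- The Humbert function `Φ₂⁽ⁿ⁾[b₁,…,bₙ; c; x₁,…,xₙ]`. -/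
noncomputable def humbertC (n : ℕ) (b : Fin n → ℂ) (c : ℂ) (x : Fin n → ℂ) : ℂ :=
  ∑' m : Fin n → ℕ,
    (∏ j, (ascPochhammer ℂ (m j)).eval (b j)) / (ascPochhammer ℂ (∑ j, m j)).eval c *
      ∏ j, x j ^ m j / ((m j).factorial : ℂ)

/-- The Lauricella hypergeometric function `F_D(a, b₁,…,bₙ; c; x₁,…,xₙ)`. -/
noncomputable def lauricellaFD (n : ℕ) (a : ℂ) (b : Fin n → ℂ) (c : ℂ)
    (x : Fin n → ℂ) : ℂ :=
  ∑' m : Fin n → ℕ,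
    (ascPochhammer ℂ (∑ j, m j)).eval a *
        (∏ j, (ascPochhammer ℂ (m j)).eval (b j)) / (ascPochhammer ℂ (∑ j, m j)).eval c *
      ∏ j, x j ^ m j / ((m j).factorial : ℂ)

open scoped Topology Nat

lemma ascPochhammer_eval_eq_prod_range {R : Type*} [CommSemiring R] (n : ℕ) (r : R) :
    (ascPochhammer R n).eval r = ∏ i ∈ range n, (r + i) := by
  induction n with
  | zero => simp
  | succ n ih => rw [ascPochhammer_succ_eval, ih, prod_range_succ]

lemma norm_ascPochhammer_eval_le (n : ℕ) (z : ℂ) :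
    ‖(ascPochhammer ℂ n).eval z‖ ≤ (‖z‖ + 1) ^ n * n ! := by
  rw [ascPochhammer_eval_eq_prod_range, norm_prod]
  calc ∏ i ∈ range n, ‖z + i‖ ≤ ∏ i ∈ range n, (‖z‖ + 1) * ((i + 1 : ℕ) : ℝ) := by
        refine prod_le_prod (fun _ _ => norm_nonneg _) fun i _ => ?_
        calc ‖z + i‖ ≤ ‖z‖ + i := (norm_add_le _ _).trans_eq (by simp)
          _ ≤ (‖z‖ + 1) * ((i + 1 : ℕ) : ℝ) := by
              push_cast
              nlinarith [norm_nonneg z, i.cast_nonneg (α := ℝ)]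
    _ = (‖z‖ + 1) ^ n * n ! := by
        rw [prod_mul_distrib, prod_const, card_range, ← Nat.cast_prod,
          prod_range_add_one_eq_factorial]

lemma summable_prod_fin_of_nonneg {β : Type*} {N : ℕ} (f : Fin N → β → ℝ)
    (hf0 : ∀ j b, 0 ≤ f j b) (hf : ∀ j, Summable (f j)) :
    Summable fun m : Fin N → β => ∏ j, f j (m j) := by
  induction N with
  | zero => exact .of_finite
  | succ N ih =>
    have hprod := Summable.mul_of_nonneg (hf 0)
      (ih (fun j => f j.succ) (fun j => hf0 j.succ) fun j => hf j.succ) (fun b => hf0 0 b)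
      fun m => prod_nonneg fun j _ => hf0 _ _
    refine ((Fin.consEquiv fun _ => β).symm.summable_iff.2 hprod).congr fun m => ?_
    simp [Fin.consEquiv, Fin.prod_univ_succ, Fin.tail]

lemma exists_prod_range_le_mul_pow {g : ℕ → ℝ} {l q : ℝ} (hg0 : ∀ i, 0 ≤ g i)
    (hg : Tendsto g atTop (𝓝 l)) (hlq : l < q) : ∃ C, ∀ s, ∏ i ∈ range s, g i ≤ C * q ^ s := by
  have hq : 0 < q := (ge_of_tendsto' hg hg0).trans_lt hlq
  obtain ⟨r, hlr, hrq⟩ := exists_between hlq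
  have hsum : Summable fun s => (∏ i ∈ range s, g i) / q ^ s := by
    refine summable_of_ratio_norm_eventually_le ((div_lt_one hq).2 hrq) ?_
    filter_upwards [hg.eventually_le_const hlr] with s hs
    have hP (k : ℕ) : 0 ≤ (∏ i ∈ range k, g i) / q ^ k :=
      div_nonneg (prod_nonneg fun i _ => hg0 i) (pow_nonneg hq.le k)
    rw [Real.norm_of_nonneg (hP _), Real.norm_of_nonneg (hP _), prod_range_succ, pow_succ]
    calc (∏ i ∈ range s, g i) * g s / (q ^ s * q) = g s / q * ((∏ i ∈ range s, g i) / q ^ s) := by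
          field_simp
      _ ≤ r / q * ((∏ i ∈ range s, g i) / q ^ s) := by gcongr; exact hP s
  obtain ⟨C, hC⟩ := hsum.tendsto_atTop_zero.bddAbove_range
  exact ⟨C, fun s => (div_le_iff₀ (by positivity)).1 (hC ⟨s, rfl⟩)⟩

lemma tendsto_add_natCast_mul_div_norm_add (A r : ℝ) (c : ℂ) :
    Tendsto (fun i : ℕ => (A + i * r) / ‖c + i‖) atTop (𝓝 r) := by
  have hnum : Tendsto (fun i : ℕ => A / i + r) atTop (𝓝 (0 + r)) :=
    (tendsto_const_div_atTop_nhds_zero_nat A).add_const r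
  have hden : Tendsto (fun i : ℕ => ‖c / i + 1‖) atTop (𝓝 ‖(0 : ℂ) + 1‖) :=
    ((tendsto_const_div_atTop_nhds_zero_nat c).add_const 1).norm
  rw [zero_add] at hnum
  rw [zero_add, norm_one] at hden
  have hquot := hnum.div hden one_ne_zero
  rw [div_one] at hquot
  refine hquot.congr' ?_
  filter_upwards [eventually_ne_atTop 0] with i hi
  dsimp only [Pi.div_apply]
  rw [div_add_one (Nat.cast_ne_zero.2 hi), norm_div, Complex.norm_natCast]
  field_simp

lemma tendsto_ascPochhammer_eval_natCast_mul_div_pow (s : ℕ) (z : ℂ) :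
    Tendsto (fun M : ℕ => (ascPochhammer ℂ s).eval (M * z) / (M : ℂ) ^ s) atTop (𝓝 (z ^ s)) := by
  have hfactor (i : ℕ) : Tendsto (fun M : ℕ => z + i * (M : ℂ)⁻¹) atTop (𝓝 z) := by
    simpa using (tendsto_inv_atTop_nhds_zero_nat.const_mul (i : ℂ)).const_add z
  have hprod := tendsto_finsetProd (range s) fun i _ => hfactor i
  rw [prod_const, card_range] at hprod
  refine hprod.congr' ?_
  filter_upwards [eventually_ne_atTop 0] with M hM
  have hM' : (M : ℂ) ≠ 0 := Nat.cast_ne_zero.2 hM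
  have hscale : ∏ i ∈ range s, (M * z + i) = ∏ i ∈ range s, ((z + i * (M : ℂ)⁻¹) * M) :=
    prod_congr rfl fun i _ => by field_simp
  rw [ascPochhammer_eval_eq_prod_range, hscale, ← prod_mul_pow_card, card_range,
    mul_div_cancel_right₀ _ (pow_ne_zero _ hM')]

lemma tendsto_natCast_mul_exp_div_sub_one (τ : ℂ) :
    Tendsto (fun M : ℕ => (M : ℂ) * (Complex.exp (τ / M) - 1)) atTop (𝓝 τ) := by
  have hderiv : HasDerivAt (fun z => Complex.exp (τ * z)) τ 0 := by
    simpa using ((hasDerivAt_id (0 : ℂ)).const_mul τ).cexp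
  have hinv : Tendsto (fun M : ℕ => (M : ℂ)⁻¹) atTop (𝓝[≠] 0) :=
    tendsto_nhdsWithin_iff.2 ⟨tendsto_inv_atTop_nhds_zero_nat,
      (eventually_ne_atTop 0).mono fun M hM => by simpa using hM⟩
  refine (hderiv.tendsto_slope_zero.comp hinv).congr fun M => ?_
  simp [div_eq_mul_inv]

lemma tendsto_ascPochhammer_eval_mul_prod_one_sub_exp {N : ℕ} (ν : ℂ) (t : Fin N → ℂ)
    (m : Fin N → ℕ) :
    Tendsto (fun M : ℕ => (ascPochhammer ℂ (∑ j, m j)).eval (-(M : ℂ) * ν) *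
        ∏ j, (1 - Complex.exp (t j / M)) ^ m j) atTop (𝓝 (∏ j, (ν * t j) ^ m j)) := by
  have hlim := (tendsto_ascPochhammer_eval_natCast_mul_div_pow (∑ j, m j) (-ν)).mul
    (tendsto_finsetProd univ fun j _ => (tendsto_natCast_mul_exp_div_sub_one (t j)).neg.pow (m j))
  have hval : ∏ j, (-ν) ^ m j * (-t j) ^ m j = ∏ j, (ν * t j) ^ m j :=
    prod_congr rfl fun j _ => by rw [← mul_pow]; ring
  rw [← prod_pow_eq_pow_sum, ← prod_mul_distrib, hval] at hlim
  refine hlim.congr' ?_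
  filter_upwards [eventually_ne_atTop 0] with M hM
  have hM' : (M : ℂ) ≠ 0 := Nat.cast_ne_zero.2 hM
  have hsub (j : Fin N) : -((M : ℂ) * (Complex.exp (t j / M) - 1)) =
      M * (1 - Complex.exp (t j / M)) := by ring
  simp only [hsub, mul_pow, prod_mul_distrib, prod_pow_eq_pow_sum, mul_neg, neg_mul]
  field_simp

noncomputable def humbertTerm {N : ℕ} (b : Fin N → ℂ) (c : ℂ) (x : Fin N → ℂ) (m : Fin N → ℕ) :
    ℂ :=
  (∏ j, (ascPochhammer ℂ (m j)).eval (b j)) / (ascPochhammer ℂ (∑ j, m j)).eval c *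
    ∏ j, x j ^ m j / ((m j).factorial : ℂ)

lemma humbertC_eq_tsum (N : ℕ) (b : Fin N → ℂ) (c : ℂ) (x : Fin N → ℂ) :
    humbertC N b c x = ∑' m, humbertTerm b c x m := rfl

lemma lauricellaFD_eq_tsum (N : ℕ) (a : ℂ) (b : Fin N → ℂ) (c : ℂ) (x : Fin N → ℂ) :
    lauricellaFD N a b c x =
      ∑' m, (ascPochhammer ℂ (∑ j, m j)).eval a * humbertTerm b c x m := by
  simp only [lauricellaFD, humbertTerm, mul_div_assoc, mul_assoc]

lemma humbertTerm_eq_mul_prod_pow {N : ℕ} (b : Fin N → ℂ) (c : ℂ) (x : Fin N → ℂ)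
    (m : Fin N → ℕ) :
    humbertTerm b c x m = humbertTerm b c 1 m * ∏ j, x j ^ m j := by
  simp only [humbertTerm, Pi.one_apply, one_pow, prod_div_distrib, prod_const_one]
  ring

lemma tendsto_ascPochhammer_eval_mul_humbertTerm {N : ℕ} (ν : ℂ) (b : Fin N → ℂ) (c : ℂ)
    (t : Fin N → ℂ) (m : Fin N → ℕ) :
    Tendsto (fun M : ℕ => (ascPochhammer ℂ (∑ j, m j)).eval (-(M : ℂ) * ν) *
        humbertTerm b c (fun j => 1 - Complex.exp (t j / M)) m) atTop
      (𝓝 (humbertTerm b c (fun j => ν * t j) m)) := by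
  rw [humbertTerm_eq_mul_prod_pow]
  refine ((tendsto_ascPochhammer_eval_mul_prod_one_sub_exp ν t m).const_mul _).congr fun M => ?_
  rw [humbertTerm_eq_mul_prod_pow b c (fun j => 1 - Complex.exp (t j / M))]
  ring

lemma norm_humbertTerm_le {N : ℕ} {b : Fin N → ℂ} {x : Fin N → ℂ} {β ξ : ℝ}
    (hb : ∀ j, ‖b j‖ + 1 ≤ β) (hx : ∀ j, ‖x j‖ ≤ ξ) (c : ℂ) (m : Fin N → ℕ) :
    ‖humbertTerm b c x m‖ ≤ (β * ξ) ^ (∑ j, m j) / ‖(ascPochhammer ℂ (∑ j, m j)).eval c‖ := by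
  rw [humbertTerm, norm_mul, norm_div, div_mul_eq_mul_div, ← prod_pow_eq_pow_sum]
  gcongr
  rw [norm_prod, norm_prod, ← prod_mul_distrib]
  refine prod_le_prod (fun j _ => by positivity) fun j _ => ?_
  have hfact : (0 : ℝ) < (m j)! := by positivity
  have hξ : 0 ≤ ξ := (norm_nonneg _).trans (hx j)
  rw [norm_div, norm_pow, Complex.norm_natCast, mul_pow, ← mul_div_assoc, div_le_iff₀ hfact]
  calc ‖(ascPochhammer ℂ (m j)).eval (b j)‖ * ‖x j‖ ^ m j
      ≤ (‖b j‖ + 1) ^ m j * (m j)! * ξ ^ m j := by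
        gcongr
        · exact norm_ascPochhammer_eval_le _ _
        · exact hx j
    _ ≤ β ^ m j * ξ ^ m j * (m j)! := by
        rw [mul_right_comm]
        gcongr
        exact hb j

lemma norm_ascPochhammer_eval_mul_humbertTerm_le {N : ℕ} {b : Fin N → ℂ} {x : Fin N → ℂ}
    {β ξ : ℝ} (hb : ∀ j, ‖b j‖ + 1 ≤ β) (hx : ∀ j, ‖x j‖ ≤ ξ) (a c : ℂ) (m : Fin N → ℕ) :
    ‖(ascPochhammer ℂ (∑ j, m j)).eval a * humbertTerm b c x m‖ ≤
      ∏ i ∈ range (∑ j, m j), β * ξ * ‖a + i‖ / ‖c + i‖ := by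
  calc ‖(ascPochhammer ℂ (∑ j, m j)).eval a * humbertTerm b c x m‖
      ≤ ‖(ascPochhammer ℂ (∑ j, m j)).eval a‖ *
          ((β * ξ) ^ (∑ j, m j) / ‖(ascPochhammer ℂ (∑ j, m j)).eval c‖) := by
        rw [norm_mul]
        gcongr
        exact norm_humbertTerm_le hb hx c m
    _ = ∏ i ∈ range (∑ j, m j), β * ξ * ‖a + i‖ / ‖c + i‖ := by
        rw [prod_div_distrib, prod_mul_distrib, prod_const, card_range,
          ascPochhammer_eval_eq_prod_range, ascPochhammer_eval_eq_prod_range, norm_prod, norm_prod]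
        ring

lemma norm_one_sub_exp_div_natCast_le {τ : ℂ} {M : ℕ} (hτ : ‖τ‖ ≤ M) :
    ‖1 - Complex.exp (τ / M)‖ ≤ 2 * ‖τ‖ / M := by
  have hdiv : ‖τ / M‖ = ‖τ‖ / M := by rw [norm_div, Complex.norm_natCast]
  rw [norm_sub_rev, mul_div_assoc, ← hdiv]
  refine Complex.norm_exp_sub_one_le ?_
  rw [hdiv]
  exact div_le_one_of_le₀ hτ M.cast_nonneg

lemma norm_ascPochhammer_eval_mul_humbertTerm_le_of_le {N M₀ M : ℕ} {b t : Fin N → ℂ} {β τ : ℝ}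
    (hβ : 0 ≤ β) (hb : ∀ j, ‖b j‖ + 1 ≤ β) (hτ : 0 ≤ τ) (ht : ∀ j, ‖t j‖ ≤ τ)
    (hτM₀ : τ ≤ M₀) (hM₀ : 0 < M₀) (hM : M₀ ≤ M) (ν c : ℂ) (m : Fin N → ℕ) :
    ‖(ascPochhammer ℂ (∑ j, m j)).eval (-(M : ℂ) * ν) *
        humbertTerm b c (fun j => 1 - Complex.exp (t j / M)) m‖ ≤
      ∏ i ∈ range (∑ j, m j), 2 * β * τ * ((‖ν‖ + i * (M₀ : ℝ)⁻¹) / ‖c + i‖) := by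
  have hM₀pos : (0 : ℝ) < M₀ := Nat.cast_pos.2 hM₀
  have hMM₀ : (M₀ : ℝ) ≤ M := Nat.cast_le.2 hM
  have hx (j : Fin N) : ‖1 - Complex.exp (t j / M)‖ ≤ 2 * τ / M :=
    (norm_one_sub_exp_div_natCast_le ((ht j).trans (hτM₀.trans hMM₀))).trans
      (by gcongr; exact ht j)
  refine (norm_ascPochhammer_eval_mul_humbertTerm_le hb hx _ c m).trans <|
    prod_le_prod (fun i _ => by positivity) fun i _ => ?_
  have hnorm : ‖-(M : ℂ) * ν + i‖ / M ≤ ‖ν‖ + i * (M₀ : ℝ)⁻¹ := by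
    rw [div_le_iff₀ (hM₀pos.trans_le hMM₀)]
    calc ‖-(M : ℂ) * ν + i‖ ≤ M * ‖ν‖ + i := (norm_add_le _ _).trans_eq (by simp)
      _ ≤ (‖ν‖ + i * (M₀ : ℝ)⁻¹) * M := by
          have hratio : 1 ≤ (M : ℝ) / M₀ := (one_le_div hM₀pos).2 hMM₀
          rw [add_mul, mul_comm ‖ν‖, mul_assoc, ← div_eq_inv_mul]
          nlinarith [i.cast_nonneg (α := ℝ)]
  calc β * (2 * τ / M) * ‖-(M : ℂ) * ν + i‖ / ‖c + i‖
      = 2 * β * τ * (‖-(M : ℂ) * ν + i‖ / M / ‖c + i‖) := by ring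
    _ ≤ 2 * β * τ * ((‖ν‖ + i * (M₀ : ℝ)⁻¹) / ‖c + i‖) := by gcongr

theorem tendsto_lauricellaFD_humbertC {N : ℕ} (ν : ℂ) (b : Fin N → ℂ) (c : ℂ) (t : Fin N → ℂ) :
    Tendsto (fun M : ℕ => lauricellaFD N (-(M : ℂ) * ν) b c fun j => 1 - Complex.exp (t j / M))
      atTop (𝓝 (humbertC N b c fun j => ν * t j)) := by
  obtain ⟨β, hβ, hb⟩ : ∃ β : ℝ, 1 ≤ β ∧ ∀ j, ‖b j‖ + 1 ≤ β :=
    ⟨1 + ∑ j, ‖b j‖, le_add_of_nonneg_right (by positivity), fun j => by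
      linarith [single_le_sum (fun i _ => norm_nonneg (b i)) (mem_univ j)]⟩
  obtain ⟨τ, hτ, ht⟩ : ∃ τ : ℝ, 0 ≤ τ ∧ ∀ j, ‖t j‖ ≤ τ :=
    ⟨∑ j, ‖t j‖, by positivity, fun j => single_le_sum (fun i _ => norm_nonneg (t i)) (mem_univ j)⟩
  obtain ⟨M₀, hM₀⟩ := exists_nat_gt (4 * β * τ + τ)
  have hτM₀ : τ ≤ M₀ := by nlinarith
  have hM₀pos : (0 : ℝ) < M₀ := by nlinarith
  have hg : Tendsto (fun i : ℕ => 2 * β * τ * ((‖ν‖ + i * (M₀ : ℝ)⁻¹) / ‖c + i‖)) atTop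
      (𝓝 (2 * β * τ * (M₀ : ℝ)⁻¹)) :=
    (tendsto_add_natCast_mul_div_norm_add _ _ c).const_mul _
  have hg_lt : 2 * β * τ * (M₀ : ℝ)⁻¹ < 1 / 2 := by
    rw [← div_eq_mul_inv, div_lt_iff₀ hM₀pos]
    nlinarith
  obtain ⟨C, hC⟩ := exists_prod_range_le_mul_pow (fun i => by positivity) hg hg_lt
  simp only [lauricellaFD_eq_tsum, humbertC_eq_tsum]
  refine tendsto_tsum_of_dominated_convergence (bound := fun m => C * ∏ j, (1 / 2 : ℝ) ^ m j)
    ((summable_prod_fin_of_nonneg _ (fun _ _ => by positivity)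
      fun _ => summable_geometric_two).mul_left C)
    (tendsto_ascPochhammer_eval_mul_humbertTerm ν b c t) ?_
  filter_upwards [eventually_ge_atTop M₀] with M hM m
  calc _ ≤ _ := norm_ascPochhammer_eval_mul_humbertTerm_le_of_le (by linarith) hb hτ ht hτM₀
        (Nat.cast_pos.1 hM₀pos) hM ν c m
    _ ≤ C * (1 / 2) ^ (∑ j, m j) := hC _
    _ = C * ∏ j, (1 / 2 : ℝ) ^ m j := by rw [prod_pow_eq_pow_sum]

/-- as the positive integer `m → ∞`,
`F_D(-mν, κ,…,κ; nκ; 1-e^{(x₁-xₙ)/m},…,1-e^{(x_{n-1}-xₙ)/m})` converges to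
`Φ₂⁽ⁿ⁻¹⁾[κ,…,κ; nκ; ν(x₁-xₙ),…,ν(x_{n-1}-xₙ)]`. -/
theorem lauricella_limit_bessel (n : ℕ) (hn : 2 ≤ n) (κ : ℝ) (ν : ℂ)
    (x : Fin n → ℝ) :
    Tendsto
      (fun m : ℕ =>
        lauricellaFD (n - 1) (-(m : ℂ) * ν) (fun _ => (κ : ℂ)) ((n : ℂ) * (κ : ℂ))
          (fun j =>
            1 - Complex.exp
              (((x (Fin.castLE (Nat.sub_le n 1) j) - x ⟨n - 1, by omega⟩ : ℝ) : ℂ) / (m : ℂ))))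
      atTop
      (nhds (humbertC (n - 1) (fun _ => (κ : ℂ)) ((n : ℂ) * (κ : ℂ))
        (fun j => ν * ((x (Fin.castLE (Nat.sub_le n 1) j) - x ⟨n - 1, by omega⟩ : ℝ) : ℂ)))) :=
  tendsto_lauricellaFD_humbertC ν _ _ fun j =>
    ((x (Fin.castLE (Nat.sub_le n 1) j) - x ⟨n - 1, by omega⟩ : ℝ) : ℂ)
end

section
/- Let n ≥ 2, κ > 0, set c_κ = Γ(nκ)/Γ(κ)ⁿ, and let f : ℝ → ℝ be continuously differentiable. Define H : ℝⁿ → ℝ by H(x) = n!·c_κ ∫_{T^{n−1}} f(Σ_{j=1}^n x_j t_j) · ∏_{j=1}^n t_j^{κ−1} dt₁⋯dt_{n−1}, where in the integrand tₙ denotes 1 − Σ_{j=1}^{n−1} t_j. Then H is invariant under all permutations of the coordinates of x, and for every i ∈ {1,…,n} and every x ∈ ℝⁿ, ∂_i H(x) = n!·c_κ ∫_{T^{n−1}} f'(Σ_{j=1}^n x_j t_j) · t_i · ∏_{j=1}^n t_j^{κ−1} dt₁⋯dt_{n−1}. -/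
/-!
In barycentric coordinates `tExt n t` the integrand of `H` is unchanged by permuting `x` and the
coordinates simultaneously, so symmetry of `H` reduces to permutation invariance of Lebesgue
measure on `T^{n-1}` in these coordinates. Exchanging the `a`-th and the last coordinate is the affine map
`t ↦ update t a (1 - ∑ tⱼ)` of determinant `-1`, and such transpositions generate `Sₙ`.

The same symmetry gives integrability of the Dirichlet weight `∏ tⱼ^{κ-1}`: some coordinate is at
least `1/n`, so the weight is dominated by a sum of products omitting one factor each, all of which
are permutations of `∏_{j<n} tⱼ^{κ-1}`, integrable on the unit cube. The derivative formula is
then differentiation under the integral sign, with the Lipschitz constant of `f` on a compact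
interval times the weight as dominating function.
-/

open Finset MeasureTheory

/-- The open unit simplex `Tᵐ ⊆ ℝᵐ`. -/
def unitSimplex (m : ℕ) : Set (Fin m → ℝ) :=
  {t | (∀ j, 0 < t j) ∧ ∑ j, t j < 1}

/-- Extend `t = (t₁,…,t_{n-1}) ∈ T^{n-1}` to `(t₁,…,t_{n-1},tₙ)` with
`tₙ = 1 - ∑_{j<n} t_j`. -/
noncomputable def tExt (n : ℕ) (t : Fin (n - 1) → ℝ) : Fin n → ℝ := fun j =>
  if h : (j : ℕ) < n - 1 then t ⟨j, h⟩ else 1 - ∑ i, t i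

/-- The intertwining operator applied to the symmetrized function
`F(x) = ∑_{σ∈Sₙ} f(x_{σ(1)})`:
`H(x) = n! c_κ ∫_{T^{n-1}} f(∑ xⱼtⱼ) ∏ tⱼ^{κ-1} dt`. -/
noncomputable def xuH (n : ℕ) (κ : ℝ) (f : ℝ → ℝ) (x : Fin n → ℝ) : ℝ :=
  (n.factorial : ℝ) * (Real.Gamma ((n : ℝ) * κ) / (Real.Gamma κ) ^ n) *
    ∫ t in unitSimplex (n - 1),
      f (∑ j, x j * tExt n t j) * ∏ j, (tExt n t j) ^ (κ - 1)

open Equiv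

lemma rpow_le_max_one_rpow {c y p : ℝ} (hc : 0 < c) (hcy : c ≤ y) (hy : y ≤ 1) :
    y ^ p ≤ max 1 (c ^ p) := by
  rcases le_total 0 p with hp | hp
  · exact le_max_of_le_left (Real.rpow_le_one (hc.le.trans hcy) hy hp)
  · exact le_max_of_le_right (Real.rpow_le_rpow_of_nonpos hc hcy hp)

section LinearForm

variable {ι : Type*} [Fintype ι]

lemma abs_sum_mul_le_norm {s : ι → ℝ} (hs : ∑ j, |s j| ≤ 1) (y : ι → ℝ) :
    |∑ j, y j * s j| ≤ ‖y‖ :=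
  calc |∑ j, y j * s j| ≤ ∑ j, ‖y‖ * |s j| :=
        (abs_sum_le_sum_abs _ _).trans <| sum_le_sum fun j _ => by
          rw [abs_mul]; gcongr; exact norm_le_pi_norm y j
    _ = ‖y‖ * ∑ j, |s j| := by rw [mul_sum]
    _ ≤ ‖y‖ := mul_le_of_le_one_right (norm_nonneg y) hs

lemma LipschitzOnWith.comp_sum_mul {f : ℝ → ℝ} {K : NNReal} {R : ℝ}
    (hf : LipschitzOnWith K f (Set.Icc (-R) R)) {s : ι → ℝ} (hs : ∑ j, |s j| ≤ 1) :
    LipschitzOnWith K (fun y => f (∑ j, y j * s j)) (Metric.closedBall (0 : ι → ℝ) R) := by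
  have hmem (y : ι → ℝ) (hy : y ∈ Metric.closedBall 0 R) : ∑ j, y j * s j ∈ Set.Icc (-R) R :=
    abs_le.1 ((abs_sum_mul_le_norm hs y).trans (mem_closedBall_zero_iff.1 hy))
  refine LipschitzOnWith.of_dist_le_mul fun y hy z hz => ?_
  calc dist (f (∑ j, y j * s j)) (f (∑ j, z j * s j))
      ≤ K * dist (∑ j, y j * s j) (∑ j, z j * s j) := hf.dist_le_mul _ (hmem y hy) _ (hmem z hz)
    _ ≤ K * dist y z := by
      gcongr
      rw [Real.dist_eq, dist_eq_norm, ← sum_sub_distrib]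
      simpa [sub_mul] using abs_sum_mul_le_norm hs (y - z)

lemma hasFDerivAt_comp_sum_mul {f : ℝ → ℝ} (hf : Differentiable ℝ f) (s x : ι → ℝ) :
    HasFDerivAt (fun y => f (∑ j, y j * s j))
      (∑ i, (deriv f (∑ j, x j * s j) * s i) • ContinuousLinearMap.proj i : (ι → ℝ) →L[ℝ] ℝ)
      x := by
  have hsum : HasFDerivAt (fun y : ι → ℝ => ∑ j, y j * s j)
      (∑ j, s j • ContinuousLinearMap.proj j : (ι → ℝ) →L[ℝ] ℝ) x :=
    HasFDerivAt.fun_sum fun j _ => (hasFDerivAt_apply j x).mul_const (s j)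
  refine ((hf _).hasDerivAt.comp_hasFDerivAt x hsum).congr_fderiv ?_
  simp_rw [smul_sum, smul_smul]

lemma exists_lipschitzOnWith_comp_sum_mul {f : ℝ → ℝ} (hf : ContDiff ℝ 1 f) (x : ι → ℝ) :
    ∃ K, ∀ s : ι → ℝ, ∑ j, |s j| ≤ 1 →
      LipschitzOnWith K (fun y => f (∑ j, y j * s j)) (Metric.ball x 1) := by
  obtain ⟨K, hK⟩ := hf.locallyLipschitz.locallyLipschitzOn.exists_lipschitzOnWith_of_compact
    (isCompact_Icc (a := -(‖x‖ + 1)) (b := ‖x‖ + 1))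
  refine ⟨K, fun s hs => (hK.comp_sum_mul hs).mono fun y hy => ?_⟩
  rw [mem_closedBall_zero_iff]
  rw [Metric.mem_ball, dist_eq_norm] at hy
  linarith [norm_le_norm_add_norm_sub' y x]

variable {α : Type*} [MeasurableSpace α] {μ : Measure α} {φ : α → ι → ℝ} {w : α → ℝ}

lemma integrable_comp_sum_mul_mul (hφ : AEMeasurable φ μ) (hφ1 : ∀ᵐ a ∂μ, ∑ j, |φ a j| ≤ 1)
    (hw : Integrable w μ) {g : ℝ → ℝ} (hg : Continuous g) (x : ι → ℝ) :
    Integrable (fun a => g (∑ j, x j * φ a j) * w a) μ := by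
  obtain ⟨C, hC⟩ := isCompact_Icc.exists_bound_of_continuousOn (s := Set.Icc (-‖x‖) ‖x‖)
    hg.continuousOn
  refine (hw.norm.const_mul C).mono' ?_ ?_
  · exact (hg.comp (by fun_prop : Continuous fun s : ι → ℝ => ∑ j, x j * s j)).measurable
      |>.comp_aemeasurable hφ |>.aestronglyMeasurable.mul hw.aestronglyMeasurable
  · filter_upwards [hφ1] with a ha
    rw [norm_mul]
    gcongr
    exact hC _ (abs_le.1 (abs_sum_mul_le_norm ha x))

theorem hasFDerivAt_integral_comp_sum_mul (hφ : AEMeasurable φ μ)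
    (hφ1 : ∀ᵐ a ∂μ, ∑ j, |φ a j| ≤ 1) (hw : Integrable w μ) {f : ℝ → ℝ} (hf : ContDiff ℝ 1 f)
    (x : ι → ℝ) :
    HasFDerivAt (fun y => ∫ a, f (∑ j, y j * φ a j) * w a ∂μ)
      (∑ i, (∫ a, deriv f (∑ j, x j * φ a j) * φ a i * w a ∂μ) • ContinuousLinearMap.proj i :
        (ι → ℝ) →L[ℝ] ℝ) x := by
  set S : (ι → ℝ) → α → ℝ := fun y a => ∑ j, y j * φ a j
  obtain ⟨K, hK⟩ := exists_lipschitzOnWith_comp_sum_mul hf x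
  have hlip : ∀ᵐ a ∂μ, ∀ y ∈ Metric.ball x 1,
      ‖f (S y a) * w a - f (S x a) * w a‖ ≤ K * ‖w a‖ * ‖y - x‖ := by
    filter_upwards [hφ1] with a ha y hy
    rw [← sub_mul, norm_mul, mul_right_comm]
    gcongr
    exact (hK (φ a) ha).norm_sub_le hy (Metric.mem_ball_self one_pos)
  set F' : α → (ι → ℝ) →L[ℝ] ℝ := fun a =>
    ∑ i, (deriv f (S x a) * φ a i * w a) • ContinuousLinearMap.proj i
  have hF'_meas : AEStronglyMeasurable F' μ := by
    refine Finset.aestronglyMeasurable_fun_sum _ fun i _ => .smul_const ?_ _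
    have hS : AEMeasurable (S x) μ :=
      (by fun_prop : Continuous fun s : ι → ℝ => ∑ j, x j * s j).measurable.comp_aemeasurable hφ
    exact (((hf.continuous_deriv le_rfl).measurable.comp_aemeasurable hS).mul
      ((measurable_pi_apply i).comp_aemeasurable hφ)).mul hw.aemeasurable |>.aestronglyMeasurable
  have hdiff (a : α) : HasFDerivAt (fun y => f (S y a) * w a) (F' a) x := by
    refine ((hasFDerivAt_comp_sum_mul (hf.differentiable one_ne_zero) (φ a) x).mul_const
      (w a)).congr_fderiv ?_
    simp_rw [F', smul_sum, smul_smul, mul_comm (w a)]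
    rfl
  obtain ⟨hF'_int, hG⟩ := hasFDerivAt_integral_of_dominated_loc_of_lip'
    (Metric.ball_mem_nhds x one_pos)
    (fun y _ => (integrable_comp_sum_mul_mul hφ hφ1 hw hf.continuous y).aestronglyMeasurable)
    (integrable_comp_sum_mul_mul hφ hφ1 hw hf.continuous x) hF'_meas hlip (hw.norm.const_mul K)
    (.of_forall hdiff)
  have hcoeff (i : ι) : Integrable (fun a => deriv f (S x a) * φ a i * w a) μ := by
    classical
    simpa [F', Pi.single_apply] using hF'_int.apply_continuousLinearMap (Pi.single i 1)
  refine hG.congr_fderiv ?_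
  rw [integral_finsetSum _ fun i _ => (hcoeff i).smul_const _]
  simp_rw [integral_smul_const]
  rfl

end LinearForm

section Simplex

variable {m : ℕ}

@[simp]
lemma tExt_castSucc (t : Fin m → ℝ) (j : Fin m) : tExt (m + 1) t (Fin.castSucc j) = t j := by
  simp [tExt]

@[simp]
lemma tExt_last (t : Fin m → ℝ) : tExt (m + 1) t (Fin.last m) = 1 - ∑ i, t i := by
  simp [tExt]

lemma sum_tExt (t : Fin m → ℝ) : ∑ j, tExt (m + 1) t j = 1 := by
  simp [Fin.sum_univ_castSucc]

lemma mem_unitSimplex_iff_tExt_pos {t : Fin m → ℝ} :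
    t ∈ unitSimplex m ↔ ∀ j, 0 < tExt (m + 1) t j := by
  simp [unitSimplex, Fin.forall_fin_succ', sub_pos, and_comm]

lemma sum_abs_tExt {t : Fin m → ℝ} (ht : t ∈ unitSimplex m) : ∑ j, |tExt (m + 1) t j| = 1 := by
  rw [mem_unitSimplex_iff_tExt_pos] at ht
  simp_rw [abs_of_pos (ht _)]
  exact sum_tExt t

lemma continuous_tExt (n : ℕ) : Continuous (tExt n) :=
  continuous_pi fun j => by unfold tExt; split_ifs <;> fun_prop

lemma measurableSet_unitSimplex (m : ℕ) : MeasurableSet (unitSimplex m) := by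
  have : unitSimplex m = (⋂ j, {t | 0 < t j}) ∩ {t | ∑ j, t j < 1} := by
    ext t; simp [unitSimplex]
  rw [this]
  exact (MeasurableSet.iInter fun j => measurableSet_lt measurable_const (measurable_pi_apply j))
    |>.inter (measurableSet_lt (by fun_prop) measurable_const)

def barycentricSwap (a : Fin m) (t : Fin m → ℝ) : Fin m → ℝ :=
  Function.update t a (1 - ∑ j, t j)

lemma sum_barycentricSwap (a : Fin m) (t : Fin m → ℝ) :
    ∑ j, barycentricSwap a t j = 1 - t a := by
  rw [barycentricSwap, Finset.sum_update_of_mem (Finset.mem_univ a),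
    Finset.sdiff_singleton_eq_erase, Finset.sum_erase_eq_sub (Finset.mem_univ a)]
  ring

lemma tExt_barycentricSwap (a : Fin m) (t : Fin m → ℝ) :
    tExt (m + 1) (barycentricSwap a t) = tExt (m + 1) t ∘ swap (Fin.castSucc a) (Fin.last m) := by
  funext k
  induction k using Fin.lastCases with
  | last =>
    rw [tExt_last, sum_barycentricSwap]
    simp
  | cast j =>
    rcases eq_or_ne j a with rfl | hj
    · simp [barycentricSwap]
    · simp [barycentricSwap, hj, swap_apply_of_ne_of_ne, (Fin.castSucc_lt_last j).ne]

lemma barycentricSwap_involutive (a : Fin m) : Function.Involutive (barycentricSwap a) := by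
  intro t
  rw [barycentricSwap, sum_barycentricSwap, barycentricSwap]
  simp

lemma continuous_barycentricSwap (a : Fin m) : Continuous (barycentricSwap a) := by
  unfold barycentricSwap
  fun_prop

lemma measurePreserving_barycentricSwap (a : Fin m) : MeasurePreserving (barycentricSwap a) := by
  classical
  -- `barycentricSwap a` is a translate of `t ↦ t - (t a + ∑ tⱼ) • eₐ`, of determinant `1 - 2`.
  let φ : Module.Dual ℝ (Fin m → ℝ) := (LinearMap.proj a : (Fin m → ℝ) →ₗ[ℝ] ℝ) + ∑ j, .proj j
  let L := LinearMap.transvection φ (-Pi.single a 1)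
  have hdet : LinearMap.det L = -1 := by
    norm_num [L, φ]
  have hL : barycentricSwap a = (· + Pi.single a 1) ∘ L := by
    funext t i
    rcases eq_or_ne i a with rfl | hi
    · simp [L, φ, barycentricSwap, LinearMap.transvection.apply, sub_eq_neg_add]
    · simp [L, φ, barycentricSwap, LinearMap.transvection.apply, hi]
  have hvol : MeasurePreserving L := by
    refine ⟨L.continuous_of_finiteDimensional.measurable, ?_⟩
    rw [Real.map_linearMap_volume_pi_eq_smul_volume_pi (by simp [hdet]), hdet]
    simp
  rw [hL]
  exact (measurePreserving_add_right volume _).comp hvol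

variable (m) in
def simplexSymmetries : Submonoid (Perm (Fin (m + 1))) where
  carrier := {σ | ∃ T : (Fin m → ℝ) ≃ᵐ (Fin m → ℝ),
    MeasurePreserving T volume volume ∧ ∀ t, tExt (m + 1) (T t) = tExt (m + 1) t ∘ σ}
  one_mem' := ⟨.refl _, .id volume, fun _ => rfl⟩
  mul_mem' := by
    rintro σ τ ⟨S, hS, hSσ⟩ ⟨T, hT, hTτ⟩
    exact ⟨S.trans T, hT.comp hS, fun t => by simp [hTτ, hSσ, Function.comp_assoc]⟩

lemma swap_castSucc_last_mem_simplexSymmetries (a : Fin m) :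
    swap (Fin.castSucc a) (Fin.last m) ∈ simplexSymmetries m :=
  ⟨{ toEquiv := (barycentricSwap_involutive a).toPerm
     measurable_toFun := (continuous_barycentricSwap a).measurable
     measurable_invFun := (continuous_barycentricSwap a).measurable },
    measurePreserving_barycentricSwap a, tExt_barycentricSwap a⟩

variable (m) in
lemma simplexSymmetries_eq_top : simplexSymmetries m = ⊤ := by
  have swap_last_mem (c : Fin (m + 1)) : swap c (Fin.last m) ∈ simplexSymmetries m := by
    induction c using Fin.lastCases with
    | last => rw [swap_self]; exact one_mem _
    | cast a => exact swap_castSucc_last_mem_simplexSymmetries a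
  refine (Submonoid.eq_top_iff' _).2 fun σ => ?_
  induction σ using Perm.swap_induction_on with
  | one => exact one_mem _
  | swap_mul σ c d _ hσ =>
    refine mul_mem (SubmonoidClass.swap_mem_trans _ (swap_last_mem c) ?_) hσ
    rw [swap_comm]
    exact swap_last_mem d

lemma exists_measurePreserving_tExt_comp (σ : Perm (Fin (m + 1))) :
    ∃ T : (Fin m → ℝ) ≃ᵐ (Fin m → ℝ), MeasurePreserving T ∧
      T ⁻¹' unitSimplex m = unitSimplex m ∧ ∀ t, tExt (m + 1) (T t) = tExt (m + 1) t ∘ σ := by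
  obtain ⟨T, hT, hTσ⟩ : σ ∈ simplexSymmetries m :=
    simplexSymmetries_eq_top m ▸ Submonoid.mem_top σ
  refine ⟨T, hT, ?_, hTσ⟩
  ext t
  simp only [Set.mem_preimage, mem_unitSimplex_iff_tExt_pos, hTσ, Function.comp_apply]
  exact σ.forall_congr_right (q := fun j => 0 < tExt (m + 1) t j)

lemma setIntegral_unitSimplex_tExt_comp_perm {E : Type*} [NormedAddCommGroup E]
    [NormedSpace ℝ E] (σ : Perm (Fin (m + 1))) (g : (Fin (m + 1) → ℝ) → E) :
    ∫ t in unitSimplex m, g (tExt (m + 1) t ∘ σ) = ∫ t in unitSimplex m, g (tExt (m + 1) t) := by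
  obtain ⟨T, hT, hpre, hTσ⟩ := exists_measurePreserving_tExt_comp σ
  simp_rw [← hTσ]
  have := hT.setIntegral_preimage_emb T.measurableEmbedding (g ∘ tExt (m + 1)) (unitSimplex m)
  rwa [hpre] at this

lemma integrableOn_unitSimplex_tExt_comp_perm {E : Type*} [NormedAddCommGroup E]
    (σ : Perm (Fin (m + 1))) {g : (Fin (m + 1) → ℝ) → E} :
    IntegrableOn (fun t => g (tExt (m + 1) t ∘ σ)) (unitSimplex m) ↔
      IntegrableOn (fun t => g (tExt (m + 1) t)) (unitSimplex m) := by
  obtain ⟨T, hT, hpre, hTσ⟩ := exists_measurePreserving_tExt_comp σ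
  simp_rw [← hTσ]
  have := hT.integrableOn_comp_preimage T.measurableEmbedding (f := g ∘ tExt (m + 1))
    (s := unitSimplex m)
  rwa [hpre] at this

lemma integrableOn_prod_rpow_unitSimplex {p : ℝ} (hp : -1 < p) :
    IntegrableOn (fun t : Fin m → ℝ => ∏ j, t j ^ p) (unitSimplex m) := by
  have hcube : IntegrableOn (fun t : Fin m → ℝ => ∏ j, t j ^ p)
      (Set.univ.pi fun _ => Set.Ioo 0 1) := by
    rw [IntegrableOn, volume_pi, Measure.restrict_pi_pi]
    exact .fintype_prod fun _ => (intervalIntegral.integrableOn_Ioo_rpow_iff one_pos).2 hp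
  refine hcube.mono_set fun t ht j _ => ⟨ht.1 j, ?_⟩
  calc t j ≤ ∑ i, t i := single_le_sum (fun i _ => (ht.1 i).le) (mem_univ j)
    _ < 1 := ht.2

lemma prod_rpow_le_sum_prod_rpow_swap {s : Fin (m + 1) → ℝ} (hs : ∀ j, 0 < s j)
    (hsum : ∑ j, s j = 1) (p : ℝ) :
    ∏ j, s j ^ p ≤
      max 1 ((m + 1 : ℝ)⁻¹ ^ p) * ∑ k, ∏ j : Fin m, s (swap k (Fin.last m) j.castSucc) ^ p := by
  obtain ⟨k, -, hk⟩ : ∃ k ∈ univ, (m + 1 : ℝ)⁻¹ ≤ s k :=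
    exists_le_of_sum_le univ_nonempty
      (by simp [hsum, mul_inv_cancel₀ (by positivity : (m + 1 : ℝ) ≠ 0)])
  have hk1 : s k ≤ 1 := hsum ▸ single_le_sum (fun j _ => (hs j).le) (mem_univ k)
  have hsplit :
      ∏ j, s j ^ p = s k ^ p * ∏ j : Fin m, s (swap k (Fin.last m) j.castSucc) ^ p := by
    rw [← Equiv.prod_comp (swap k (Fin.last m)), Fin.prod_univ_castSucc, swap_apply_right,
      mul_comm]
  have hnonneg (k : Fin (m + 1)) : 0 ≤ ∏ j : Fin m, s (swap k (Fin.last m) j.castSucc) ^ p :=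
    prod_nonneg fun j _ => Real.rpow_nonneg (hs _).le p
  rw [hsplit]
  exact mul_le_mul (rpow_le_max_one_rpow (by positivity) hk hk1)
    (single_le_sum (fun k _ => hnonneg k) (mem_univ k)) (hnonneg k)
    (zero_le_one.trans (le_max_left _ _))

lemma integrableOn_prod_tExt_rpow {p : ℝ} (hp : -1 < p) :
    IntegrableOn (fun t : Fin m → ℝ => ∏ j, tExt (m + 1) t j ^ p) (unitSimplex m) := by
  have hdom : IntegrableOn (fun t => max 1 ((m + 1 : ℝ)⁻¹ ^ p) *
      ∑ k, ∏ j : Fin m, tExt (m + 1) t (swap k (Fin.last m) j.castSucc) ^ p) (unitSimplex m) := by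
    refine (integrable_finsetSum _ fun k _ => ?_).const_mul _
    refine (integrableOn_unitSimplex_tExt_comp_perm (swap k (Fin.last m))
      (g := fun s => ∏ j : Fin m, s j.castSucc ^ p)).2 ?_
    simpa using integrableOn_prod_rpow_unitSimplex hp
  have hmeas : Measurable fun t : Fin m → ℝ => ∏ j, tExt (m + 1) t j ^ p :=
    Finset.measurable_prod _ fun j _ =>
      ((continuous_apply j).comp (continuous_tExt _)).measurable.pow_const p
  refine hdom.mono' hmeas.aestronglyMeasurable <|
    (ae_restrict_iff' (measurableSet_unitSimplex m)).2 (.of_forall fun t ht => ?_)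
  rw [mem_unitSimplex_iff_tExt_pos] at ht
  rw [Real.norm_of_nonneg (prod_nonneg fun j _ => Real.rpow_nonneg (ht j).le p)]
  exact prod_rpow_le_sum_prod_rpow_swap ht (sum_tExt t) p

end Simplex

lemma xuH_comp_perm (m : ℕ) (κ : ℝ) (f : ℝ → ℝ) (σ : Perm (Fin (m + 1)))
    (x : Fin (m + 1) → ℝ) : xuH (m + 1) κ f (x ∘ σ) = xuH (m + 1) κ f x := by
  let g : (Fin (m + 1) → ℝ) → ℝ := fun s => f (∑ j, x j * s j) * ∏ j, s j ^ (κ - 1)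
  have hg (s : Fin (m + 1) → ℝ) :
      g (s ∘ ⇑σ⁻¹) = f (∑ j, (x ∘ σ) j * s j) * ∏ j, s j ^ (κ - 1) := by
    simp only [g, Function.comp_apply]
    rw [← Equiv.sum_comp σ, Equiv.prod_comp σ⁻¹ fun j => s j ^ (κ - 1)]
    simp
  unfold xuH
  congr 1
  simp_rw [← hg]
  exact setIntegral_unitSimplex_tExt_comp_perm σ⁻¹ g

theorem symmetric_intertwining_general (n : ℕ) (κ : ℝ) (hκ : 0 < κ)
    (f : ℝ → ℝ) (hf : ContDiff ℝ 1 f) :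
    (∀ (σ : Equiv.Perm (Fin n)) (x : Fin n → ℝ), xuH n κ f (x ∘ σ) = xuH n κ f x) ∧
      ∀ (i : Fin n) (x : Fin n → ℝ),
        fderiv ℝ (xuH n κ f) x (Pi.single i 1) =
          (n.factorial : ℝ) * (Real.Gamma ((n : ℝ) * κ) / (Real.Gamma κ) ^ n) *
            ∫ t in unitSimplex (n - 1),
              deriv f (∑ j, x j * tExt n t j) * tExt n t i *
                ∏ j, (tExt n t j) ^ (κ - 1) := by
  rcases n with _ | m
  · exact ⟨fun σ x => congrArg _ (Subsingleton.elim _ _), fun i => i.elim0⟩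
  refine ⟨xuH_comp_perm m κ f, fun i x => ?_⟩
  have hφ1 : ∀ᵐ t ∂volume.restrict (unitSimplex m), ∑ j, |tExt (m + 1) t j| ≤ 1 :=
    (ae_restrict_iff' (measurableSet_unitSimplex m)).2 (.of_forall fun t ht => (sum_abs_tExt ht).le)
  have hH : HasFDerivAt (xuH (m + 1) κ f) _ x :=
    (hasFDerivAt_integral_comp_sum_mul (continuous_tExt _).aemeasurable hφ1
      (integrableOn_prod_tExt_rpow (m := m) (by linarith : -1 < κ - 1)) hf x).const_mul
      (((m + 1).factorial : ℝ) * (Real.Gamma (((m + 1 : ℕ) : ℝ) * κ) / (Real.Gamma κ) ^ (m + 1)))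
  rw [hH.fderiv]
  simp [Pi.single_apply]

/-- `H` is symmetric under all permutations of the coordinates, and its
`i`-th partial derivative is
`∂_i H(x) = n! c_κ ∫_{T^{n-1}} f'(∑ xⱼtⱼ) t_i ∏ tⱼ^{κ-1} dt`. -/
theorem symmetric_intertwining (n : ℕ) (hn : 2 ≤ n) (κ : ℝ) (hκ : 0 < κ)
    (f : ℝ → ℝ) (hf : ContDiff ℝ 1 f) :
    (∀ (σ : Equiv.Perm (Fin n)) (x : Fin n → ℝ), xuH n κ f (x ∘ σ) = xuH n κ f x) ∧
      ∀ (i : Fin n) (x : Fin n → ℝ),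
        fderiv ℝ (xuH n κ f) x (Pi.single i 1) =
          (n.factorial : ℝ) * (Real.Gamma ((n : ℝ) * κ) / (Real.Gamma κ) ^ n) *
            ∫ t in unitSimplex (n - 1),
              deriv f (∑ j, x j * tExt n t j) * tExt n t i *
                ∏ j, (tExt n t j) ^ (κ - 1) :=
  symmetric_intertwining_general n κ hκ f hf
end
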